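/- Let f ∈ ℝ[x] be a real polynomial of degree q, and let U ⊆ [0,1] be a subset such that every point of [0,1] is within distance Δ < 1/(2q²) of U. Then max_{x∈[0,1]} |f(x)| ≤ (sup_{u∈U} |f(u)|)/(1 − 2q²Δ). -/

import Mathlib

noncomputable section MarkovProofSection

section ComplexPart
open Polynomial Complex



lemma my_eval_reflect (P : ℂ[X]) (N : ℕ) (hP : P.natDegree ≤ N) (z : ℂ) (hz : z ≠ 0) :
    (P.reflect N).eval z = z ^ N * P.eval z⁻¹ := by
  have hinv : Invertible (z⁻¹) := invertibleOfNonzero (inv_ne_zero hz)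
  have := Polynomial.eval₂_reflect_mul_pow (RingHom.id ℂ) (z⁻¹) N P hP
  have hiz : (⅟(z⁻¹) : ℂ) = z := invOf_eq_right_inv (inv_mul_cancel₀ hz)
  rw [hiz] at this
  simp only [eval₂_eq_eval_map, Polynomial.map_id] at this
  have hzw : (z * z⁻¹) ^ N = 1 := by rw [mul_inv_cancel₀ hz, one_pow]
  linear_combination z ^ N * this - (P.reflect N).eval z * hzw

/-- Maximum modulus for polynomials on the closed unit disc. -/
lemma poly_maxmod (P : ℂ[X]) (M : ℝ) (hM : ∀ z : ℂ, ‖z‖ = 1 → ‖P.eval z‖ ≤ M) :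
    ∀ z : ℂ, ‖z‖ ≤ 1 → ‖P.eval z‖ ≤ M := by
  intro z hz
  have hb : Bornology.IsBounded (Metric.ball (0:ℂ) 1) := Metric.isBounded_ball
  have hd : DiffContOnCl ℂ (fun w => P.eval w) (Metric.ball (0:ℂ) 1) :=
    (Differentiable.diffContOnCl (fun w => P.differentiableAt))
  have := Complex.norm_le_of_forall_mem_frontier_norm_le hb hd (C := M) ?_ (z := z) ?_
  · exact this
  · intro w hw
    rw [frontier_ball (0:ℂ) one_ne_zero] at hw
    exact hM w (by simpa using (mem_sphere_zero_iff_norm.mp hw))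
  · rw [closure_ball (0:ℂ) one_ne_zero]
    simpa using hz

/-- Growth bound outside the unit disc. -/
lemma poly_growth (P : ℂ[X]) (N : ℕ) (hP : P.natDegree ≤ N) (M : ℝ)
    (hM : ∀ z : ℂ, ‖z‖ = 1 → ‖P.eval z‖ ≤ M) :
    ∀ z : ℂ, 1 ≤ ‖z‖ → ‖P.eval z‖ ≤ M * ‖z‖ ^ N := by
  intro z hz
  have hz0 : z ≠ 0 := by intro h; rw [h] at hz; simp at hz; linarith
  have hrefl : ∀ w : ℂ, ‖w‖ = 1 → ‖(P.reflect N).eval w‖ ≤ M := by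
    intro w hw
    have hw0 : w ≠ 0 := by intro h; rw [h] at hw; simp at hw
    rw [my_eval_reflect P N hP w hw0]
    have : ‖w⁻¹‖ = 1 := by rw [norm_inv, hw]; norm_num
    calc ‖w ^ N * P.eval w⁻¹‖ = ‖w‖^N * ‖P.eval w⁻¹‖ := by rw [norm_mul, norm_pow]
      _ ≤ 1 * M := by rw [hw]; simpa using hM _ this
      _ = M := one_mul M
  have h2 : ‖(P.reflect N).eval z⁻¹‖ ≤ M :=
    poly_maxmod _ M hrefl _ (by rw [norm_inv]; exact inv_le_one_of_one_le₀ hz)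
  rw [my_eval_reflect P N hP z⁻¹ (inv_ne_zero hz0), inv_inv] at h2
  have := norm_mul ((z⁻¹)^N) (P.eval z)
  rw [norm_pow, norm_inv] at this
  rw [this] at h2
  have hzn : (0:ℝ) < ‖z‖ ^ N := by positivity
  calc ‖P.eval z‖ = (‖z‖⁻¹ ^ N * ‖P.eval z‖) * ‖z‖^N := by
        rw [mul_comm (‖z‖⁻¹^N) _, mul_assoc, inv_pow, inv_mul_cancel₀ hzn.ne', mul_one]
    _ ≤ M * ‖z‖ ^ N := by
        apply mul_le_mul_of_nonneg_right h2 (le_of_lt hzn)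

/-- Coefficient bound. -/
lemma poly_coeff_bound (P : ℂ[X]) (N : ℕ) (hP : P.natDegree ≤ N) (M : ℝ)
    (hM : ∀ z : ℂ, ‖z‖ = 1 → ‖P.eval z‖ ≤ M) : ‖P.coeff N‖ ≤ M := by
  have hrefl : ∀ w : ℂ, ‖w‖ = 1 → ‖(P.reflect N).eval w‖ ≤ M := by
    intro w hw
    have hw0 : w ≠ 0 := by intro h; rw [h] at hw; simp at hw
    rw [my_eval_reflect P N hP w hw0]
    have h1 : ‖w⁻¹‖ = 1 := by rw [norm_inv, hw]; norm_num
    calc ‖w ^ N * P.eval w⁻¹‖ = ‖w‖^N * ‖P.eval w⁻¹‖ := by rw [norm_mul, norm_pow]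
      _ ≤ 1 * M := by rw [hw]; simpa using hM _ h1
      _ = M := one_mul M
  have := poly_maxmod _ M hrefl 0 (by simp)
  rw [← Polynomial.coeff_zero_eq_eval_zero, Polynomial.coeff_reflect] at this
  simpa using this

/-- log-derivative half-plane lemma. -/
lemma logderiv_halfplane (s : Multiset ℂ) (z : ℂ) (hz : ‖z‖ = 1)
    (hs : ∀ r ∈ s, ‖r‖ < 1) :
    (((s.map (fun r => X - C r)).prod).eval z ≠ 0) ∧
    ((s.card : ℝ) / 2 ≤ (z * ((s.map (fun r => X - C r)).prod.derivative.eval z) /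
      ((s.map (fun r => X - C r)).prod.eval z)).re) := by
  induction s using Multiset.induction with
  | empty => simp
  | cons r s ih =>
    have hr : ‖r‖ < 1 := hs r (Multiset.mem_cons_self r s)
    have hs' : ∀ x ∈ s, ‖x‖ < 1 := fun x hx => hs x (Multiset.mem_cons_of_mem hx)
    obtain ⟨h0, hre⟩ := ih hs'
    have hzr : z - r ≠ 0 := by
      intro h
      have : z = r := by linear_combination h
      rw [this] at hz; rw [hz] at hr; linarith
    set Q : ℂ[X] := (s.map (fun r => X - C r)).prod with hQ
    have hprod : ((r ::ₘ s).map (fun r => X - C r)).prod = (X - C r) * Q := by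
      rw [Multiset.map_cons, Multiset.prod_cons]
    constructor
    · rw [hprod]
      simp only [Polynomial.eval_mul, Polynomial.eval_sub, Polynomial.eval_X, Polynomial.eval_C]
      exact mul_ne_zero hzr h0
    · rw [hprod]
      have hd : ((X - C r) * Q).derivative = Q + (X - C r) * Q.derivative := by
        rw [Polynomial.derivative_mul]
        simp
      rw [hd]
      have heval : z * ((Q + (X - C r) * Q.derivative).eval z) / (((X - C r) * Q).eval z)
          = z / (z - r) + z * (Q.derivative.eval z) / (Q.eval z) := by
        simp only [Polynomial.eval_add, Polynomial.eval_mul, Polynomial.eval_sub,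
          Polynomial.eval_X, Polynomial.eval_C]
        field_simp
      rw [heval, Complex.add_re]
      have h1 : (1:ℝ)/2 ≤ (z / (z - r)).re := by
        rw [Complex.div_re]
        have hnorm : (0:ℝ) < Complex.normSq (z - r) := Complex.normSq_pos.mpr hzr
        rw [← add_div, le_div_iff₀ hnorm]
        have hzz : Complex.normSq z = 1 := by
          rw [← Complex.sq_norm, hz]; norm_num
        have hrr : Complex.normSq r < 1 := by
          rw [← Complex.sq_norm]
          nlinarith [norm_nonneg r, hr]
        rw [Complex.normSq_apply] at hzz hrr
        simp only [Complex.sub_re, Complex.sub_im, Complex.normSq_apply]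
        nlinarith
      have hcard : ((r ::ₘ s).card : ℝ) = s.card + 1 := by
        rw [Multiset.card_cons]; push_cast; ring
      rw [hcard]
      linarith





lemma key_ineq (P : ℂ[X]) (m : ℕ) (hm : 1 ≤ m) (hP : P.natDegree ≤ m) (M : ℝ) (hM0 : 0 < M)
    (hM : ∀ z : ℂ, ‖z‖ = 1 → ‖P.eval z‖ ≤ M) (z0 : ℂ) (hz0 : ‖z0‖ = 1)
    (l : ℂ) (hl : 1 < ‖l‖) :
    ‖(m : ℂ) * P.eval z0 - z0 * (derivative P).eval z0‖ ≤
      ‖(derivative P).eval z0 - (m : ℂ) * l * (M : ℂ) * z0 ^ (m - 1)‖ := by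
  set F : ℂ[X] := P - C (l * M) * X ^ m with hF
  -- coefficient / degree facts
  have hcm : ‖P.coeff m‖ ≤ M := poly_coeff_bound P m hP M hM
  have hlM : M < ‖l‖ * M := by nlinarith
  have hFm : F.coeff m = P.coeff m - l * M := by
    simp [hF, Polynomial.coeff_sub, Polynomial.coeff_C_mul, Polynomial.coeff_X_pow, mul_assoc]
  have hFm0 : F.coeff m ≠ 0 := by
    rw [hFm]
    intro h
    have hPm : P.coeff m = l * M := by linear_combination h
    rw [hPm, norm_mul, Complex.norm_real, Real.norm_of_nonneg hM0.le] at hcm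
    linarith
  have hFdeg_le : F.natDegree ≤ m := by
    apply le_trans (Polynomial.natDegree_sub_le _ _)
    simp only [max_le_iff]
    exact ⟨hP, le_trans (Polynomial.natDegree_C_mul_le _ _) (by simp)⟩
  have hFdeg : F.natDegree = m := natDegree_eq_of_le_of_coeff_ne_zero hFdeg_le hFm0
  have hF0 : F ≠ 0 := fun h => hFm0 (by simp [h])
  -- roots
  have hcard : Multiset.card F.roots = m := by
    rw [← hFdeg]
    exact (Polynomial.splits_iff_card_roots.mp (IsAlgClosed.splits F))
  have hroots_lt : ∀ r ∈ F.roots, ‖r‖ < 1 := by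
    intro r hr
    by_contra hge
    push_neg at hge
    have hr0 : F.eval r = 0 := (Polynomial.mem_roots'.mp hr).2
    have hPr : P.eval r = l * M * r ^ m := by
      have : P.eval r - l * M * r ^ m = 0 := by
        simpa [hF] using hr0
      linear_combination this
    have h1 : ‖P.eval r‖ ≤ M * ‖r‖ ^ m := poly_growth P m hP M hM r hge
    rw [hPr] at h1
    have h2 : ‖l * (M:ℂ) * r ^ m‖ = ‖l‖ * M * ‖r‖ ^ m := by
      rw [norm_mul, norm_mul, norm_pow, Complex.norm_real, Real.norm_of_nonneg hM0.le]
    rw [h2] at h1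
    have hrm : (0:ℝ) < ‖r‖ ^ m := by positivity
    nlinarith [mul_pos hM0 hrm]
  -- factorization and halfplane
  have hcard' : Multiset.card F.roots = F.natDegree := by rw [hFdeg]; exact hcard
  have hfac := Polynomial.C_leadingCoeff_mul_prod_multiset_X_sub_C (p := F) hcard' 
  set Q : ℂ[X] := (F.roots.map (fun r => X - C r)).prod with hQ
  obtain ⟨hQne, hQre⟩ := logderiv_halfplane F.roots z0 hz0 hroots_lt
  rw [← hQ] at hQne hQre
  rw [hcard] at hQre
  have hlc : F.leadingCoeff ≠ 0 := Polynomial.leadingCoeff_ne_zero.mpr hF0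
  have hFz0 : F.eval z0 = F.leadingCoeff * Q.eval z0 := by
    conv_lhs => rw [← hfac]
    rw [Polynomial.eval_mul, Polynomial.eval_C]
  have hFz0ne : F.eval z0 ≠ 0 := by rw [hFz0]; exact mul_ne_zero hlc hQne
  have hF'z0 : (derivative F).eval z0 = F.leadingCoeff * (derivative Q).eval z0 := by
    conv_lhs => rw [← hfac]
    rw [Polynomial.derivative_mul]
    simp
  have hratio : z0 * (derivative F).eval z0 / F.eval z0
      = z0 * (derivative Q).eval z0 / Q.eval z0 := by
    rw [hFz0, hF'z0]
    field_simp
  have hre : (m : ℝ) / 2 ≤ (z0 * (derivative F).eval z0 / F.eval z0).re := by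
    rw [hratio]; exact hQre
  -- the norm inequality ‖m - w‖ ≤ ‖w‖
  set w : ℂ := z0 * (derivative F).eval z0 / F.eval z0 with hw
  have hnormsq : Complex.normSq ((m:ℂ) - w) ≤ Complex.normSq w := by
    simp only [Complex.normSq_apply, Complex.sub_re, Complex.sub_im, Complex.natCast_re,
      Complex.natCast_im]
    have : (m:ℝ)/2 ≤ w.re := hre
    nlinarith [Nat.cast_nonneg (α := ℝ) m]
  have hnorm : ‖(m:ℂ) - w‖ ≤ ‖w‖ := by
    rw [Complex.norm_def, Complex.norm_def]
    exact Real.sqrt_le_sqrt hnormsq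
  -- multiply through by ‖F.eval z0‖
  have hkey : ‖(m:ℂ) * F.eval z0 - z0 * (derivative F).eval z0‖ ≤ ‖(derivative F).eval z0‖ := by
    have e1 : (m:ℂ) * F.eval z0 - z0 * (derivative F).eval z0 = ((m:ℂ) - w) * F.eval z0 := by
      rw [hw]; field_simp
    have e2 : z0 * (derivative F).eval z0 = w * F.eval z0 := by
      rw [hw]; field_simp
    have e3 : ‖z0 * (derivative F).eval z0‖ = ‖(derivative F).eval z0‖ := by
      rw [norm_mul, hz0, one_mul]
    calc ‖(m:ℂ) * F.eval z0 - z0 * (derivative F).eval z0‖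
        = ‖(m:ℂ) - w‖ * ‖F.eval z0‖ := by rw [e1, norm_mul]
      _ ≤ ‖w‖ * ‖F.eval z0‖ := mul_le_mul_of_nonneg_right hnorm (norm_nonneg _)
      _ = ‖z0 * (derivative F).eval z0‖ := by rw [e2, norm_mul]
      _ = ‖(derivative F).eval z0‖ := e3
  -- translate back to P
  have hdF : derivative F = derivative P - C (l * M) * ((m:ℂ[X]) * X ^ (m-1)) := by
    rw [hF, Polynomial.derivative_sub, Polynomial.derivative_C_mul, Polynomial.derivative_X_pow]
    congr 1
  have hz0pow : z0 ^ (m - 1) * z0 = z0 ^ m := by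
    rw [← pow_succ]
    congr 1
    omega
  have hevdF : (derivative F).eval z0 = (derivative P).eval z0 - (m:ℂ) * l * M * z0 ^ (m-1) := by
    rw [hdF]
    simp only [Polynomial.eval_sub, Polynomial.eval_mul, Polynomial.eval_C,
      Polynomial.eval_pow, Polynomial.eval_X, Polynomial.eval_natCast]
    ring
  have hevF : (m:ℂ) * F.eval z0 - z0 * (derivative F).eval z0
      = (m:ℂ) * P.eval z0 - z0 * (derivative P).eval z0 := by
    rw [hevdF, hF]
    simp only [Polynomial.eval_sub, Polynomial.eval_mul, Polynomial.eval_C,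
      Polynomial.eval_pow, Polynomial.eval_X]
    rw [← hz0pow]
    ring
  rw [hevF, hevdF] at hkey
  exact hkey





lemma conj_eval (q : ℝ[X]) (z : ℂ) :
    (starRingEnd ℂ) ((q.map (algebraMap ℝ ℂ)).eval z) =
      (q.map (algebraMap ℝ ℂ)).eval ((starRingEnd ℂ) z) := by
  rw [Polynomial.eval_map, Polynomial.eval_map, Polynomial.hom_eval₂]
  congr 1
  exact RingHom.ext fun x => Complex.conj_ofReal x

lemma selfinv_reflect_deriv (P : ℂ[X]) (m : ℕ) (hm : 1 ≤ m) (hP : P.natDegree ≤ m)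
    (hrefl : P.reflect m = P) :
    C (m : ℂ) * P - X * derivative P = (derivative P).reflect (m - 1) := by
  have hsym : ∀ k, k ≤ m → P.coeff k = P.coeff (m - k) := by
    intro k hk
    conv_lhs => rw [← hrefl]
    rw [Polynomial.coeff_reflect, Polynomial.revAt_le hk]
  ext k
  rw [Polynomial.coeff_sub, Polynomial.coeff_C_mul, Polynomial.coeff_reflect]
  cases k with
  | zero =>
    rw [Polynomial.mul_coeff_zero, Polynomial.coeff_X_zero, zero_mul, sub_zero,
      Polynomial.revAt_le (Nat.zero_le _), Polynomial.coeff_derivative]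
    simp only [Nat.sub_zero]
    have h1 : m - 1 + 1 = m := by omega
    rw [h1]
    rw [show P.coeff m = P.coeff 0 from by rw [hsym 0 (Nat.zero_le m), Nat.sub_zero]]
    have h2 : ((m - 1 : ℕ) : ℂ) + 1 = (m : ℂ) := by
      rw [← Nat.cast_add_one, h1]
    rw [h2]
    ring
  | succ j =>
    rw [Polynomial.coeff_X_mul, Polynomial.coeff_derivative]
    rcases le_or_gt (j + 1) (m - 1) with hk | hk
    · rw [Polynomial.revAt_le hk, Polynomial.coeff_derivative]
      have h1 : m - 1 - (j + 1) + 1 = m - (j + 1) := by omega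
      rw [h1]
      rw [show P.coeff (m - (j+1)) = P.coeff (j+1) from (hsym (j+1) (by omega)).symm]
      have h2 : ((m - 1 - (j + 1) : ℕ) : ℂ) + 1 = ((m : ℂ)) - ((j : ℂ) + 1) := by
        rw [← Nat.cast_add_one, h1, Nat.cast_sub (by omega)]
        push_cast
        ring
      rw [h2]
      push_cast
      ring
    · rw [Polynomial.revAt_eq_self_of_lt hk, Polynomial.coeff_derivative]
      have hz2 : P.coeff (j + 1 + 1) = 0 :=
        Polynomial.coeff_eq_zero_of_natDegree_lt (by omega)
      rw [hz2, zero_mul]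
      rcases eq_or_lt_of_le (show m ≤ j + 1 by omega) with he | hl2
      · rw [← he]
        have : P.coeff m ≠ 0 → ((j:ℂ) + 1) = (m:ℂ) := by
          intro _
          rw [he]; push_cast; ring
        rcases eq_or_ne (P.coeff m) 0 with h0 | h0
        · rw [h0]; ring
        · rw [this h0]; ring
      · rw [Polynomial.coeff_eq_zero_of_natDegree_lt (by omega : P.natDegree < j + 1)]
        ring

lemma selfinv_deriv_bound (Pr : ℝ[X]) (m : ℕ) (hm : 1 ≤ m)
    (P : ℂ[X]) (hPdef : P = Pr.map (algebraMap ℝ ℂ))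
    (hP : P.natDegree ≤ m) (hrefl : P.reflect m = P)
    (M : ℝ) (hM0 : 0 < M) (hM : ∀ z : ℂ, ‖z‖ = 1 → ‖P.eval z‖ ≤ M)
    (z0 : ℂ) (hz0 : ‖z0‖ = 1) :
    ‖(derivative P).eval z0‖ ≤ m * M / 2 := by
  set A := (derivative P).eval z0 with hA
  by_cases hA0 : A = 0
  · rw [hA0, norm_zero]; positivity
  have hz0ne : z0 ≠ 0 := by intro h; rw [h] at hz0; simp at hz0
  have hz0pne : z0 ^ (m - 1) ≠ 0 := pow_ne_zero _ hz0ne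
  have hinv : z0⁻¹ = (starRingEnd ℂ) z0 := Complex.inv_eq_conj hz0
  have hconjA : (derivative P).eval ((starRingEnd ℂ) z0) = (starRingEnd ℂ) A := by
    rw [hA, hPdef, Polynomial.derivative_map, ← conj_eval, ← Polynomial.derivative_map]
  have hid : (m : ℂ) * P.eval z0 - z0 * A = z0 ^ (m - 1) * (starRingEnd ℂ) A := by
    have hd := congrArg (Polynomial.eval z0) (selfinv_reflect_deriv P m hm hP hrefl)
    rw [Polynomial.eval_sub, Polynomial.eval_mul, Polynomial.eval_mul, Polynomial.eval_C,
      Polynomial.eval_X] at hd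
    rw [my_eval_reflect (derivative P) (m - 1)
      (le_trans (Polynomial.natDegree_derivative_le P) (Nat.sub_le_sub_right hP 1)) z0 hz0ne,
      hinv, hconjA] at hd
    exact hd
  have hnormid : ‖(m : ℂ) * P.eval z0 - z0 * A‖ = ‖A‖ := by
    rw [hid, norm_mul, norm_pow, hz0, one_pow, one_mul]
    exact RCLike.norm_conj A
  have hb : ∀ t : ℝ, 1 < t → ‖A‖ ≤ |‖A‖ - t * m * M| := by
    intro t ht
    have hAn : (0:ℝ) < ‖A‖ := norm_pos_iff.mpr hA0
    set u : ℂ := A / ((z0 ^ (m - 1)) * (‖A‖ : ℂ)) with hu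
    have hunorm : ‖u‖ = 1 := by
      rw [hu, norm_div, norm_mul, norm_pow, hz0, one_pow, one_mul,
        Complex.norm_real, Real.norm_of_nonneg hAn.le, div_self hAn.ne']
    set l : ℂ := (t : ℂ) * u with hl
    have hlnorm : 1 < ‖l‖ := by
      rw [hl, norm_mul, hunorm, mul_one, Complex.norm_real, Real.norm_of_nonneg (by linarith)]
      exact ht
    have hk := key_ineq P m hm hP M hM0 hM z0 hz0 l hlnorm
    rw [hnormid] at hk
    have hup : u * z0 ^ (m - 1) = A / (‖A‖ : ℂ) := by
      rw [hu]
      rw [div_mul_eq_mul_div, mul_comm (z0 ^ (m-1)) ((‖A‖ : ℂ))]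
      exact mul_div_mul_right A _ hz0pne
    have hrw : (derivative P).eval z0 - (m : ℂ) * l * (M : ℂ) * z0 ^ (m - 1)
        = A * (1 - (m : ℂ) * t * M / (‖A‖ : ℂ)) := by
      rw [hl]
      rw [show (m:ℂ) * ((t:ℂ) * u) * (M:ℂ) * z0 ^ (m-1) = (m:ℂ) * t * M * (u * z0 ^ (m-1)) from by
        ring, hup]
      rw [← hA]
      field_simp
    rw [hrw, norm_mul] at hk
    have hend : ‖(1 : ℂ) - (m : ℂ) * t * M / (‖A‖ : ℂ)‖ = |1 - m * t * M / ‖A‖| := by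
      rw [show (1 : ℂ) - (m : ℂ) * t * M / (‖A‖ : ℂ) = ((1 - m * t * M / ‖A‖ : ℝ) : ℂ) by
        push_cast; ring]
      rw [Complex.norm_real, Real.norm_eq_abs]
    rw [hend] at hk
    calc ‖A‖ ≤ ‖A‖ * |1 - m * t * M / ‖A‖| := hk
      _ = |‖A‖ - t * m * M| := by
          rw [show ‖A‖ * |1 - (m:ℝ) * t * M / ‖A‖| = |‖A‖| * |1 - (m:ℝ) * t * M / ‖A‖| from by
            rw [_root_.abs_of_nonneg hAn.le]]
          rw [← abs_mul]
          congr 1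
          rw [mul_sub, mul_one, mul_div_assoc',
            mul_comm (‖A‖) ((m:ℝ) * t * M), mul_div_assoc, div_self hAn.ne', mul_one]
          ring
  by_contra hcon
  push_neg at hcon
  have hAn : (0:ℝ) < ‖A‖ := norm_pos_iff.mpr hA0
  have hmM : (0:ℝ) < m * M := by
    have : (1:ℝ) ≤ m := by exact_mod_cast hm
    nlinarith
  set t : ℝ := (1 + 2 * ‖A‖ / (m * M)) / 2 with htdef
  have ht1 : 1 < t := by
    rw [htdef]
    have : 1 < 2 * ‖A‖ / (m * M) := by
      rw [lt_div_iff₀ hmM]; linarith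
    linarith
  have htu : t * m * M < 2 * ‖A‖ := by
    rw [htdef]
    have he : (1 + 2 * ‖A‖ / (m * M)) / 2 * m * M = (m * M + 2 * ‖A‖) / 2 := by
      field_simp
    rw [he]
    linarith
  have := hb t ht1
  have htpos : 0 < t * m * M := by positivity
  rcases abs_cases (‖A‖ - t * m * M) with ⟨he, _⟩ | ⟨he, _⟩ <;> rw [he] at this <;> nlinarith





/-- The self-inversive lift `z^n p((z+1/z)/2)` of a real polynomial. -/
def auxP (p : ℝ[X]) (n : ℕ) : ℝ[X] :=
  ∑ j ∈ Finset.range (n + 1), C (p.coeff j * (2⁻¹ : ℝ) ^ j) * (X ^ 2 + 1) ^ j * X ^ (n - j)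

lemma auxP_natDegree (p : ℝ[X]) (n : ℕ) : (auxP p n).natDegree ≤ 2 * n := by
  unfold auxP
  refine le_trans (Polynomial.natDegree_sum_le _ _) ?_
  rw [Finset.fold_max_le]
  constructor
  · exact Nat.zero_le _
  intro j hj
  have hj' : j ≤ n := Nat.lt_succ_iff.mp (Finset.mem_range.mp hj)
  refine le_trans (Polynomial.natDegree_mul_le) ?_
  have h1 : (C (p.coeff j * (2⁻¹ : ℝ) ^ j) * (X ^ 2 + 1) ^ j : ℝ[X]).natDegree ≤ 2 * j := by
    refine le_trans (Polynomial.natDegree_mul_le) ?_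
    rw [Polynomial.natDegree_C, zero_add]
    refine le_trans (Polynomial.natDegree_pow_le) ?_
    have : ((X ^ 2 + 1 : ℝ[X])).natDegree ≤ 2 := by
      refine le_trans (Polynomial.natDegree_add_le _ _) ?_
      simp [Polynomial.natDegree_X_pow, Polynomial.natDegree_one]
    calc j * (X ^ 2 + 1 : ℝ[X]).natDegree ≤ j * 2 := Nat.mul_le_mul_left j this
      _ = 2 * j := Nat.mul_comm j 2
  calc (C (p.coeff j * (2⁻¹:ℝ) ^ j) * (X ^ 2 + 1) ^ j : ℝ[X]).natDegree + (X ^ (n-j) : ℝ[X]).natDegree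
      ≤ 2 * j + (n - j) := by
        apply Nat.add_le_add h1
        simp [Polynomial.natDegree_X_pow]
    _ ≤ 2 * n := by omega

lemma auxP_eval (p : ℝ[X]) (n : ℕ) (hp : p.natDegree ≤ n) (z : ℂ) (hz : z ≠ 0) :
    ((auxP p n).map (algebraMap ℝ ℂ)).eval z
      = z ^ n * (p.map (algebraMap ℝ ℂ)).eval ((z + z⁻¹) / 2) := by
  have h2 : (2 : ℂ) ≠ 0 := two_ne_zero
  rw [Polynomial.eval_map]
  unfold auxP
  rw [Polynomial.eval₂_finset_sum]
  have hrhs : (p.map (algebraMap ℝ ℂ)).eval ((z + z⁻¹) / 2)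
      = ∑ j ∈ Finset.range (n + 1), ((p.coeff j : ℂ)) * ((z + z⁻¹) / 2) ^ j := by
    rw [Polynomial.eval_eq_sum_range' (lt_of_le_of_lt
      Polynomial.natDegree_map_le (Nat.lt_succ_of_le hp))]
    refine Finset.sum_congr rfl fun j _ => ?_
    rw [Polynomial.coeff_map]
    rfl
  rw [hrhs, Finset.mul_sum]
  refine Finset.sum_congr rfl fun j hj => ?_
  have hj' : j ≤ n := Nat.lt_succ_iff.mp (Finset.mem_range.mp hj)
  simp only [Polynomial.eval₂_mul, Polynomial.eval₂_pow, Polynomial.eval₂_C, Polynomial.eval₂_X,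
    Polynomial.eval₂_add, Polynomial.eval₂_one]
  have hmap : (algebraMap ℝ ℂ) (p.coeff j * (2⁻¹ : ℝ) ^ j)
      = (p.coeff j : ℂ) * ((2 : ℂ)⁻¹) ^ j := by
    rw [map_mul, map_pow]
    norm_num
  rw [hmap]
  have hzn : z ^ n = z ^ (n - j) * z ^ j := (pow_sub_mul_pow z hj').symm
  rw [hzn]
  have hhalf : (z + z⁻¹) / 2 = (z ^ 2 + 1) / (2 * z) := by
    field_simp
  rw [hhalf, div_pow, mul_pow]
  field_simp
  have h2j : ((1:ℂ) / 2) ^ j * 2 ^ j = 1 := by rw [← mul_pow]; norm_num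
  linear_combination (↑(p.coeff j) * (1 + z ^ 2) ^ j) * h2j

lemma auxP_reflect (p : ℝ[X]) (n : ℕ) (hp : p.natDegree ≤ n) :
    ((auxP p n).map (algebraMap ℝ ℂ)).reflect (2 * n) = (auxP p n).map (algebraMap ℝ ℂ) := by
  set P : ℂ[X] := (auxP p n).map (algebraMap ℝ ℂ) with hP
  have hdeg : P.natDegree ≤ 2 * n :=
    le_trans Polynomial.natDegree_map_le (auxP_natDegree p n)
  have hroot : ∀ z : ℂ, z ≠ 0 → (P.reflect (2 * n) - P).eval z = 0 := by
    intro z hz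
    rw [Polynomial.eval_sub, my_eval_reflect P (2 * n) hdeg z hz,
      auxP_eval p n hp z hz, auxP_eval p n hp z⁻¹ (inv_ne_zero hz), inv_inv]
    have hcomm : (z⁻¹ + z) / 2 = (z + z⁻¹) / 2 := by ring
    rw [hcomm]
    have : z ^ (2 * n) * ((z⁻¹) ^ n * (p.map (algebraMap ℝ ℂ)).eval ((z + z⁻¹)/2))
        = z ^ n * (p.map (algebraMap ℝ ℂ)).eval ((z + z⁻¹)/2) := by
      rw [inv_pow]
      rw [show z ^ (2 * n) = z ^ n * z ^ n from by rw [two_mul, pow_add]]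
      field_simp
    rw [this]
    ring
  have hinf : Set.Infinite {x : ℂ | (P.reflect (2 * n) - P).IsRoot x} := by
    apply Set.Infinite.mono (s := {(0:ℂ)}ᶜ)
    · intro z hz
      exact hroot z hz
    · exact Set.Finite.infinite_compl (Set.finite_singleton 0)
  have := Polynomial.eq_zero_of_infinite_isRoot _ hinf
  linear_combination (norm := ring_nf) this

lemma auxP_circle (p : ℝ[X]) (n : ℕ) (hp : p.natDegree ≤ n) (M : ℝ)
    (hM : ∀ x ∈ Set.Icc (-1 : ℝ) 1, |p.eval x| ≤ M) :
    ∀ z : ℂ, ‖z‖ = 1 → ‖((auxP p n).map (algebraMap ℝ ℂ)).eval z‖ ≤ M := by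
  intro z hz
  obtain ⟨θ, rfl⟩ := (Complex.norm_eq_one_iff z).mp hz
  set z : ℂ := Complex.exp ((θ:ℂ) * I) with hzdef
  have hzne : z ≠ 0 := Complex.exp_ne_zero _
  rw [auxP_eval p n hp z hzne]
  have hcos : (z + z⁻¹) / 2 = ((Real.cos θ : ℝ) : ℂ) := by
    rw [hzdef, ← Complex.exp_neg, Complex.ofReal_cos, Complex.cos]
    rw [show -((θ:ℂ) * I) = -(θ:ℂ) * I from by ring]
  rw [hcos]
  have heval : (p.map (algebraMap ℝ ℂ)).eval ((Real.cos θ : ℝ) : ℂ)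
      = ((p.eval (Real.cos θ) : ℝ) : ℂ) := by
    rw [Polynomial.eval_map]
    exact Polynomial.eval₂_at_apply (algebraMap ℝ ℂ) (Real.cos θ)
  rw [heval, norm_mul, norm_pow]
  rw [show ‖z‖ = 1 from hz, one_pow, one_mul, Complex.norm_real, Real.norm_eq_abs]
  exact hM _ ⟨Real.neg_one_le_cos θ, Real.cos_le_one θ⟩

/-- Bernstein's inequality for real polynomials, with positive bound. -/
lemma bernstein_core (n : ℕ) (hn : 1 ≤ n) (p : ℝ[X]) (hp : p.natDegree ≤ n) (M : ℝ)
    (hM0 : 0 < M) (hM : ∀ x ∈ Set.Icc (-1 : ℝ) 1, |p.eval x| ≤ M)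
    (x : ℝ) (hx : x ∈ Set.Icc (-1 : ℝ) 1) :
    |(derivative p).eval x| * Real.sqrt (1 - x ^ 2) ≤ n * M := by
  set θ := Real.arccos x with hθdef
  have hcos : Real.cos θ = x := Real.cos_arccos hx.1 hx.2
  have hsin : Real.sin θ = Real.sqrt (1 - x ^ 2) := by
    rw [hθdef, Real.sin_arccos]
  set P : ℂ[X] := (auxP p n).map (algebraMap ℝ ℂ) with hPdef
  have hdeg : P.natDegree ≤ 2 * n :=
    le_trans Polynomial.natDegree_map_le (auxP_natDegree p n)
  set z0 : ℂ := Complex.exp (θ * I) with hz0def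
  have hz0 : ‖z0‖ = 1 := by
    rw [hz0def, Complex.norm_exp]
    simp
  -- derivative bound from the self-inversive lemma
  have hDbound : ‖(derivative P).eval z0‖ ≤ n * M := by
    have := selfinv_deriv_bound (auxP p n) (2 * n) (by omega) P hPdef hdeg
      (auxP_reflect p n hp) M hM0 (auxP_circle p n hp M hM) z0 hz0
    calc ‖(derivative P).eval z0‖ ≤ ((2 * n : ℕ) : ℝ) * M / 2 := this
      _ = n * M := by push_cast; ring
  -- chain rule identities
  have hzexp : ∀ t : ℝ, Complex.exp ((t : ℂ) * I) ≠ 0 := fun t => Complex.exp_ne_zero _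
  have hfun : ∀ t : ℝ, P.eval (Complex.exp ((t : ℂ) * I))
      = Complex.exp ((n : ℂ) * t * I) * ((p.eval (Real.cos t) : ℝ) : ℂ) := by
    intro t
    rw [hPdef, auxP_eval p n hp _ (hzexp t)]
    have hinv : (Complex.exp ((t : ℂ) * I))⁻¹ = Complex.exp (-((t:ℂ) * I)) := by
      rw [← Complex.exp_neg]
    have hcos2 : (Complex.exp ((t : ℂ) * I) + (Complex.exp ((t : ℂ) * I))⁻¹) / 2
        = ((Real.cos t : ℝ) : ℂ) := by
      rw [hinv, Complex.ofReal_cos, Complex.cos]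
      rw [show -((t:ℂ) * I) = -(t:ℂ) * I from by ring]
    rw [hcos2]
    have heval : (p.map (algebraMap ℝ ℂ)).eval ((Real.cos t : ℝ) : ℂ)
        = ((p.eval (Real.cos t) : ℝ) : ℂ) := by
      rw [Polynomial.eval_map]
      exact Polynomial.eval₂_at_apply (algebraMap ℝ ℂ) (Real.cos t)
    rw [heval]
    congr 1
    rw [← Complex.exp_nat_mul]
    congr 1
    ring
  -- LHS derivative
  have hL : HasDerivAt (fun t : ℝ => P.eval (Complex.exp ((t : ℂ) * I)))
      ((derivative P).eval z0 * (z0 * I)) θ := by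
    have h1 : HasDerivAt (fun w : ℂ => P.eval (Complex.exp (w * I)))
        ((derivative P).eval z0 * (Complex.exp ((θ:ℂ) * I) * I)) (θ : ℂ) := by
      have hexp : HasDerivAt (fun w : ℂ => Complex.exp (w * I))
          (Complex.exp ((θ:ℂ) * I) * I) (θ : ℂ) := by
        simpa using ((hasDerivAt_id ((θ:ℂ))).mul_const I).cexp
      have hpoly : HasDerivAt (fun z : ℂ => P.eval z) ((derivative P).eval z0) z0 :=
        P.hasDerivAt z0
      simpa [hz0def, Function.comp_def] using (hpoly.comp (θ:ℂ) hexp)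
    exact h1.comp_ofReal
  -- RHS derivative
  have hR : HasDerivAt (fun t : ℝ => Complex.exp ((n : ℂ) * t * I) * ((p.eval (Real.cos t) : ℝ) : ℂ))
      (((n:ℂ) * I * Complex.exp ((n:ℂ) * θ * I)) * ((p.eval (Real.cos θ) : ℝ) : ℂ)
        + Complex.exp ((n:ℂ) * θ * I) * ((( - Real.sin θ * (derivative p).eval (Real.cos θ) : ℝ)) : ℂ)) θ := by
    have hA : HasDerivAt (fun t : ℝ => Complex.exp ((n : ℂ) * t * I))
        ((n:ℂ) * I * Complex.exp ((n:ℂ) * θ * I)) θ := by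
      have h1 : HasDerivAt (fun w : ℂ => Complex.exp ((n : ℂ) * w * I))
          (Complex.exp ((n:ℂ) * θ * I) * ((n:ℂ) * I)) (θ:ℂ) := by
        have hlin : HasDerivAt (fun w : ℂ => (n : ℂ) * w * I) ((n:ℂ) * I) (θ:ℂ) := by
          simpa using (((hasDerivAt_id ((θ:ℂ))).const_mul ((n:ℂ))).mul_const I)
        simpa using hlin.cexp
      have := h1.comp_ofReal
      simpa [mul_comm] using this
    have hB : HasDerivAt (fun t : ℝ => ((p.eval (Real.cos t) : ℝ) : ℂ))
        ((((- Real.sin θ) * (derivative p).eval (Real.cos θ) : ℝ)) : ℂ) θ := by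
      have hreal : HasDerivAt (fun t : ℝ => p.eval (Real.cos t))
          ((derivative p).eval (Real.cos θ) * (- Real.sin θ)) θ :=
        (p.hasDerivAt (Real.cos θ)).comp θ (Real.hasDerivAt_cos θ)
      have := hreal.ofReal_comp
      simpa [mul_comm] using this
    exact hA.mul hB
  -- equate
  have hfeq : (fun t : ℝ => P.eval (Complex.exp ((t : ℂ) * I)))
      = (fun t : ℝ => Complex.exp ((n : ℂ) * t * I) * ((p.eval (Real.cos t) : ℝ) : ℂ)) :=
    funext hfun
  rw [hfeq] at hL
  have huniq := hL.unique hR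
  -- take norms
  have hnorm1 : ‖(derivative P).eval z0 * (z0 * I)‖ = ‖(derivative P).eval z0‖ := by
    rw [norm_mul, norm_mul, hz0]
    simp
  have hexpn : ‖Complex.exp ((n:ℂ) * θ * I)‖ = 1 := by
    rw [show (n:ℂ) * θ * I = ((n * θ : ℝ) : ℂ) * I from by push_cast; ring]
    rw [Complex.norm_exp]
    simp
  have hre : |Real.sin θ * (derivative p).eval (Real.cos θ)| ≤ ‖(derivative P).eval z0 * (z0 * I)‖ := by
    rw [huniq]
    have hfac : ((n:ℂ) * I * Complex.exp ((n:ℂ) * θ * I)) * ((p.eval (Real.cos θ) : ℝ) : ℂ)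
        + Complex.exp ((n:ℂ) * θ * I) * ((( - Real.sin θ * (derivative p).eval (Real.cos θ) : ℝ)) : ℂ)
        = Complex.exp ((n:ℂ) * θ * I) *
          ((((- Real.sin θ * (derivative p).eval (Real.cos θ) : ℝ)) : ℂ)
            + ((n : ℝ) * p.eval (Real.cos θ) : ℝ) * I) := by
      push_cast
      ring
    rw [hfac, norm_mul, hexpn, one_mul]
    have := Complex.abs_re_le_norm ((((- Real.sin θ * (derivative p).eval (Real.cos θ) : ℝ)) : ℂ)
            + (((n : ℝ) * p.eval (Real.cos θ) : ℝ) : ℂ) * I)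
    have hre2 : ((((- Real.sin θ * (derivative p).eval (Real.cos θ) : ℝ)) : ℂ)
            + (((n : ℝ) * p.eval (Real.cos θ) : ℝ) : ℂ) * I).re
        = - Real.sin θ * (derivative p).eval (Real.cos θ) := by
      simp only [Complex.add_re, Complex.ofReal_re, Complex.mul_I_re, Complex.ofReal_im,
        neg_zero, add_zero, neg_mul]
    rw [hre2] at this
    calc |Real.sin θ * (derivative p).eval (Real.cos θ)|
        = |(- Real.sin θ) * (derivative p).eval (Real.cos θ)| := by rw [neg_mul, abs_neg]
      _ ≤ _ := by rw [show (- Real.sin θ) * (derivative p).eval (Real.cos θ)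
            = -Real.sin θ * (derivative p).eval (Real.cos θ) from rfl]; exact this
  rw [hnorm1] at hre
  have hsin0 : 0 ≤ Real.sin θ := Real.sin_nonneg_of_nonneg_of_le_pi (Real.arccos_nonneg x) (Real.arccos_le_pi x)
  calc |(derivative p).eval x| * Real.sqrt (1 - x ^ 2)
      = |Real.sin θ * (derivative p).eval (Real.cos θ)| := by
        rw [hcos, abs_mul, _root_.abs_of_nonneg hsin0, hsin]; ring
    _ ≤ ‖(derivative P).eval z0‖ := hre
    _ ≤ n * M := hDbound

/-- Bernstein's inequality, general version. -/
lemma bernstein_ineq (n : ℕ) (hn : 1 ≤ n) (p : ℝ[X]) (hp : p.natDegree ≤ n) (M : ℝ)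
    (hM : ∀ x ∈ Set.Icc (-1 : ℝ) 1, |p.eval x| ≤ M)
    (x : ℝ) (hx : x ∈ Set.Icc (-1 : ℝ) 1) :
    |(derivative p).eval x| * Real.sqrt (1 - x ^ 2) ≤ n * M := by
  have hM0 : 0 ≤ M := le_trans (abs_nonneg _) (hM 0 (by norm_num))
  have hn' : (0:ℝ) < n := by exact_mod_cast hn
  refine le_of_forall_pos_le_add ?_
  intro ε hε
  have hcore := bernstein_core n hn p hp (M + ε / n) (by positivity)
    (fun y hy => le_trans (hM y hy) (le_add_of_nonneg_right (by positivity))) x hx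
  calc |(derivative p).eval x| * Real.sqrt (1 - x ^ 2) ≤ n * (M + ε / n) := hcore
    _ = n * M + ε := by rw [mul_add, mul_div_cancel₀ _ hn'.ne']
    _ ≤ n * M + ε := le_rfl


end ComplexPart

section RealPart
open Polynomial Real Finset



/-- |sin (n θ)| ≤ n |sin θ| -/
lemma abs_sin_nat_mul_le (n : ℕ) (θ : ℝ) : |Real.sin (n * θ)| ≤ n * |Real.sin θ| := by
  induction n with
  | zero => simp
  | succ k ih =>
    have h : Real.sin ((k + 1 : ℕ) * θ) = Real.sin (k * θ) * Real.cos θ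
        + Real.cos (k * θ) * Real.sin θ := by
      rw [show ((k + 1 : ℕ) : ℝ) * θ = (k : ℝ) * θ + θ from by push_cast; ring]
      exact Real.sin_add _ _
    rw [h]
    calc |Real.sin (k * θ) * Real.cos θ + Real.cos (k * θ) * Real.sin θ|
        ≤ |Real.sin (k * θ) * Real.cos θ| + |Real.cos (k * θ) * Real.sin θ| := abs_add_le _ _
      _ ≤ |Real.sin (k * θ)| * 1 + 1 * |Real.sin θ| := by
          rw [abs_mul, abs_mul]
          gcongr
          · exact Real.abs_cos_le_one θ
          · exact Real.abs_cos_le_one _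
      _ ≤ k * |Real.sin θ| + 1 * |Real.sin θ| := by
          rw [mul_one]
          linarith [ih]
      _ = (k + 1 : ℕ) * |Real.sin θ| := by push_cast; ring

/-- natDegree of Chebyshev T -/
lemma natDegree_T_le : ∀ n : ℕ, (Polynomial.Chebyshev.T ℝ (n : ℤ)).natDegree ≤ n := by
  intro n
  induction n using Nat.strong_induction_on with
  | _ n ih =>
    match n with
    | 0 => simp [Polynomial.Chebyshev.T_zero]
    | 1 => simp [Polynomial.Chebyshev.T_one]
    | (k+2) =>
      rw [show ((k + 2 : ℕ) : ℤ) = (k : ℤ) + 2 from by push_cast; ring,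
        Polynomial.Chebyshev.T_add_two]
      refine le_trans (Polynomial.natDegree_sub_le _ _) ?_
      rw [max_le_iff]
      constructor
      · refine le_trans (Polynomial.natDegree_mul_le) ?_
        have h1 : (2 * X : ℝ[X]).natDegree ≤ 1 := by
          refine le_trans (Polynomial.natDegree_mul_le) ?_
          simp
        have h2 : (Polynomial.Chebyshev.T ℝ ((k : ℤ) + 1)).natDegree ≤ k + 1 := by
          rw [show ((k : ℤ) + 1) = ((k + 1 : ℕ) : ℤ) from by push_cast; ring]
          exact ih (k + 1) (by omega)
        omega
      · exact le_trans (ih k (by omega)) (by omega)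

/-- derivative of T formula -/
lemma T_deriv_eval (n : ℕ) (θ : ℝ) :
    (derivative (Polynomial.Chebyshev.T ℝ (n : ℤ))).eval (Real.cos θ) * Real.sin θ
      = n * Real.sin (n * θ) := by
  set Td := derivative (Polynomial.Chebyshev.T ℝ (n : ℤ))
  have h1 : HasDerivAt (fun t : ℝ => (Polynomial.Chebyshev.T ℝ (n : ℤ)).eval (Real.cos t))
      (Td.eval (Real.cos θ) * (- Real.sin θ)) θ :=
    ((Polynomial.Chebyshev.T ℝ (n : ℤ)).hasDerivAt (Real.cos θ)).comp θ (Real.hasDerivAt_cos θ)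
  have hfun : (fun t : ℝ => (Polynomial.Chebyshev.T ℝ (n : ℤ)).eval (Real.cos t))
      = fun t : ℝ => Real.cos ((n : ℝ) * t) := by
    funext t
    have := Polynomial.Chebyshev.T_real_cos t (n : ℤ)
    rw [this]
    norm_num
  rw [hfun] at h1
  have hin : HasDerivAt (fun t : ℝ => (n : ℝ) * t) ((n : ℝ)) θ := by
    simpa using (hasDerivAt_id θ).const_mul (n:ℝ)
  have h2 : HasDerivAt (fun t : ℝ => Real.cos ((n : ℝ) * t))
      ((- Real.sin ((n:ℝ) * θ)) * (n : ℝ)) θ := by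
    simpa [Function.comp_def] using (Real.hasDerivAt_cos ((n:ℝ) * θ)).comp θ hin
  have := h1.unique h2
  nlinarith [this]

/-- value of T' at 1 is at most n^2, by one-sided continuity -/
lemma T_deriv_le_sq (n : ℕ) (hn : 1 ≤ n) (x : ℝ)
    (hx0 : Real.cos (π / (2 * n)) ≤ x) (hx1 : x ≤ 1) :
    (derivative (Polynomial.Chebyshev.T ℝ (n : ℤ))).eval x ≤ (n : ℝ) ^ 2 := by
  set Td := derivative (Polynomial.Chebyshev.T ℝ (n : ℤ)) with hTd
  have hn1 : (1:ℝ) ≤ n := by exact_mod_cast hn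
  have hn' : (0:ℝ) < n := by linarith
  have hθpos : 0 < π / (2 * n) := by positivity
  have hθlt : π / (2 * n) ≤ π / 2 := by
    have h2n : (2:ℝ) ≤ 2 * n := by linarith
    exact div_le_div_of_nonneg_left Real.pi_pos.le (by norm_num) h2n
  have key : ∀ y : ℝ, Real.cos (π / (2 * n)) ≤ y → y < 1 → Td.eval y ≤ (n:ℝ)^2 := by
    intro y hy0 hy1
    set φ := Real.arccos y with hφ
    have hybounds : -1 ≤ y := le_trans (by nlinarith [Real.neg_one_le_cos (π / (2*n))]) hy0
    have hcos : Real.cos φ = y := Real.cos_arccos hybounds hy1.le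
    have hφpos : 0 < φ := by
      rw [hφ]
      apply Real.arccos_pos.mpr hy1
    have hφle : φ ≤ π / (2 * n) := by
      by_contra hgt
      push_neg at hgt
      have hmem1 : π / (2 * n) ∈ Set.Icc (0:ℝ) π :=
        ⟨hθpos.le, by linarith [Real.pi_pos, hθlt]⟩
      have hmem2 : φ ∈ Set.Icc (0:ℝ) π := ⟨Real.arccos_nonneg y, Real.arccos_le_pi y⟩
      have := Real.strictAntiOn_cos hmem1 hmem2 hgt
      rw [hcos] at this
      linarith
    have hsinpos : 0 < Real.sin φ :=
      Real.sin_pos_of_pos_of_lt_pi hφpos (by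
        calc φ ≤ π / (2*n) := hφle
          _ ≤ π / 2 := hθlt
          _ < π := by linarith [Real.pi_pos])
    have hid := T_deriv_eval n φ
    rw [hcos] at hid
    have habs := abs_sin_nat_mul_le n φ
    have hsin_eq : |Real.sin φ| = Real.sin φ := abs_of_pos hsinpos
    rw [hsin_eq] at habs
    have hupper : Real.sin ((n:ℝ) * φ) ≤ n * Real.sin φ :=
      le_trans (le_abs_self _) habs
    have : Td.eval y * Real.sin φ ≤ (n:ℝ)^2 * Real.sin φ := by
      rw [hid]
      calc (n:ℝ) * Real.sin (n * φ) ≤ n * (n * Real.sin φ) := by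
            apply mul_le_mul_of_nonneg_left hupper hn'.le
        _ = (n:ℝ)^2 * Real.sin φ := by ring
    exact le_of_mul_le_mul_right this hsinpos
  rcases lt_or_eq_of_le hx1 with hlt | heq
  · exact key x hx0 hlt
  · -- x = 1 : continuity
    subst heq
    have ht01 : Real.cos (π / (2 * n)) < 1 := by
      have h0mem : (0:ℝ) ∈ Set.Icc (0:ℝ) π := ⟨le_rfl, Real.pi_pos.le⟩
      have hmem : π / (2 * n) ∈ Set.Icc (0:ℝ) π :=
        ⟨hθpos.le, by linarith [Real.pi_pos, hθlt]⟩
      have := Real.strictAntiOn_cos h0mem hmem hθpos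
      simpa using this
    have hcont : ContinuousWithinAt (fun z : ℝ => Td.eval z)
        (Set.Ioo (Real.cos (π / (2 * n))) 1) 1 :=
      (Polynomial.continuous Td).continuousWithinAt
    have hne : (nhdsWithin (1:ℝ) (Set.Ioo (Real.cos (π / (2 * n))) 1)).NeBot := by
      apply mem_closure_iff_nhdsWithin_neBot.mp
      rw [closure_Ioo (ne_of_lt ht01)]
      exact ⟨ht01.le, le_rfl⟩
    refine le_of_tendsto hcont ?_
    filter_upwards [self_mem_nhdsWithin] with z hz
    exact key z hz.1.le hz.2





lemma eval_basisDivisor (a b x : ℝ) :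
    (Lagrange.basisDivisor a b).eval x = (x - b) / (a - b) := by
  rw [Lagrange.basisDivisor, Polynomial.eval_mul, Polynomial.eval_C, Polynomial.eval_sub,
    Polynomial.eval_X, Polynomial.eval_C]
  rw [div_eq_inv_mul]

/-- Markov inequality, outer region. -/
lemma markov_outer (n : ℕ) (hn : 1 ≤ n) (p : ℝ[X]) (hp : p.natDegree ≤ n) (M : ℝ)
    (hM : ∀ x ∈ Set.Icc (-1 : ℝ) 1, |p.eval x| ≤ M)
    (x0 : ℝ) (hx0 : Real.cos (π / (2 * n)) ≤ x0) (hx1 : x0 ≤ 1) :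
    |(derivative p).eval x0| ≤ (n : ℝ) ^ 2 * M := by
  classical
  have hn1 : (1:ℝ) ≤ n := by exact_mod_cast hn
  have hn' : (0:ℝ) < n := by linarith
  have hM0 : 0 ≤ M := le_trans (abs_nonneg _) (hM 0 (by norm_num))
  set θ : ℕ → ℝ := fun k => (2 * k + 1) * (π / (2 * n)) with hθdef
  set v : ℕ → ℝ := fun k => Real.cos (θ k) with hvdef
  set q : ℝ[X] := derivative p with hqdef
  set Td : ℝ[X] := derivative (Polynomial.Chebyshev.T ℝ (n : ℤ)) with hTddef
  have hbase : (0:ℝ) < π / (2 * n) := by positivity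
  have hθpos : ∀ k, 0 < θ k := by
    intro k
    apply mul_pos (by positivity) hbase
  have hθlt : ∀ k, k < n → θ k < π := by
    intro k hk
    have hkn : (k : ℝ) + 1 ≤ n := by exact_mod_cast hk
    have h1 : (2 * (k:ℝ) + 1) * (π / (2 * n)) < (2 * (n:ℝ)) * (π / (2 * n)) := by
      apply mul_lt_mul_of_pos_right (by linarith) hbase
    have h2 : (2 * (n:ℝ)) * (π / (2 * n)) = π := by
      field_simp
    calc θ k < 2 * (n:ℝ) * (π / (2 * n)) := h1
      _ = π := h2
  have hθmono : ∀ j k, j < k → θ j < θ k := by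
    intro j k hjk
    have : (j:ℝ) < k := by exact_mod_cast hjk
    apply mul_lt_mul_of_pos_right (by linarith) hbase
  have hsin : ∀ k, k < n → 0 < Real.sin (θ k) := fun k hk =>
    Real.sin_pos_of_pos_of_lt_pi (hθpos k) (hθlt k hk)
  have hθmem : ∀ k, k < n → θ k ∈ Set.Icc (0:ℝ) π := fun k hk => ⟨(hθpos k).le, (hθlt k hk).le⟩
  have hvmono : ∀ j k, j < k → k < n → v k < v j := by
    intro j k hjk hk
    exact Real.strictAntiOn_cos (hθmem j (lt_trans hjk hk)) (hθmem k hk) (hθmono j k hjk)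
  have hinj : Set.InjOn v ↑(range n) := by
    intro a ha b hb hab
    simp only [coe_range, Set.mem_Iio] at ha hb
    rcases lt_trichotomy a b with h | h | h
    · exact absurd hab (ne_of_gt (hvmono a b h hb))
    · exact h
    · exact absurd hab (ne_of_lt (hvmono b a h ha))
  have hvmem : ∀ k, v k ∈ Set.Icc (-1:ℝ) 1 := fun k =>
    ⟨Real.neg_one_le_cos _, Real.cos_le_one _⟩
  have hv0 : v 0 = Real.cos (π / (2 * n)) := by
    rw [hvdef, hθdef]; norm_num
  have hx0v : ∀ k, k < n → v k ≤ x0 := by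
    intro k hk
    rcases Nat.eq_zero_or_pos k with h0 | hpos
    · subst h0; rw [hv0]; exact hx0
    · exact le_trans (hvmono 0 k hpos hk).le (by rw [hv0]; exact hx0)
  -- Bernstein at the nodes
  have hnodeq : ∀ k, k < n → |q.eval (v k)| * Real.sin (θ k) ≤ n * M := by
    intro k hk
    have hb := bernstein_ineq n hn p hp M hM (v k) (hvmem k)
    have hs : Real.sqrt (1 - (v k) ^ 2) = Real.sin (θ k) := by
      rw [hvdef]
      rw [show (1:ℝ) - Real.cos (θ k) ^ 2 = Real.sin (θ k) ^ 2 from by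
        rw [Real.sin_sq]]
      rw [Real.sqrt_sq_eq_abs, abs_of_pos (hsin k hk)]
    rw [hs] at hb
    exact hb
  -- Chebyshev derivative at the nodes
  have hTnode : ∀ k, k < n → Td.eval (v k) * Real.sin (θ k) = n * (-1:ℝ)^k := by
    intro k hk
    have hT := T_deriv_eval n (θ k)
    have hnθ : (n:ℝ) * θ k = k * π + π / 2 := by
      rw [hθdef]
      field_simp
    rw [hnθ] at hT
    have hsin2 : Real.sin ((k:ℝ) * π + π / 2) = (-1:ℝ)^k := by
      rw [Real.sin_add, Real.sin_nat_mul_pi, Real.cos_pi_div_two, Real.sin_pi_div_two]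
      have := Real.cos_nat_mul_pi_sub 0 k
      simp only [sub_zero, Real.cos_zero, mul_one] at this
      rw [zero_mul, zero_add, mul_one, this]
    rw [hsin2] at hT
    rw [hvdef]
    exact hT
  have hTdveval : ∀ k, k < n → Td.eval (v k) = n * (-1:ℝ)^k / Real.sin (θ k) := by
    intro k hk
    exact eq_div_of_mul_eq (hsin k hk).ne' (hTnode k hk)
  -- degrees
  have hqdeg : q.degree < ((range n).card : WithBot ℕ) := by
    rw [card_range]
    calc q.degree ≤ (q.natDegree : WithBot ℕ) := Polynomial.degree_le_natDegree
      _ < (n : WithBot ℕ) := by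
          have h1 : q.natDegree < n :=
            lt_of_le_of_lt (le_trans (Polynomial.natDegree_derivative_le p)
              (Nat.sub_le_sub_right hp 1)) (by omega)
          exact_mod_cast h1
  have hTdeg : Td.degree < ((range n).card : WithBot ℕ) := by
    rw [card_range]
    calc Td.degree ≤ (Td.natDegree : WithBot ℕ) := Polynomial.degree_le_natDegree
      _ < (n : WithBot ℕ) := by
          have h1 : Td.natDegree < n :=
            lt_of_le_of_lt (le_trans (Polynomial.natDegree_derivative_le _)
              (Nat.sub_le_sub_right (natDegree_T_le n) 1)) (by omega)
          exact_mod_cast h1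
  -- interpolation identities
  have hqx : ∀ x : ℝ, q.eval x
      = ∑ k ∈ range n, q.eval (v k) * (Lagrange.basis (range n) v k).eval x := by
    intro x
    conv_lhs => rw [Lagrange.eq_interpolate hinj hqdeg]
    rw [Lagrange.interpolate_apply, Polynomial.eval_finset_sum]
    exact Finset.sum_congr rfl fun k _ => by rw [Polynomial.eval_mul, Polynomial.eval_C]
  have hTdx : ∀ x : ℝ, Td.eval x
      = ∑ k ∈ range n, Td.eval (v k) * (Lagrange.basis (range n) v k).eval x := by
    intro x
    conv_lhs => rw [Lagrange.eq_interpolate hinj hTdeg]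
    rw [Lagrange.interpolate_apply, Polynomial.eval_finset_sum]
    exact Finset.sum_congr rfl fun k _ => by rw [Polynomial.eval_mul, Polynomial.eval_C]
  set B : ℕ → ℝ := fun k => (Lagrange.basis (range n) v k).eval x0 with hBdef
  have hBval : ∀ k, B k = ∏ j ∈ (range n).erase k, (x0 - v j) / (v k - v j) := by
    intro k
    rw [hBdef]
    unfold Lagrange.basis
    simp only [Polynomial.eval_prod]
    exact Finset.prod_congr rfl fun j _ => eval_basisDivisor _ _ _
  have herase : ∀ k, k < n → (range n).erase k = range k ∪ Ico (k+1) n := by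
    intro k hk
    ext j
    simp only [Finset.mem_erase, Finset.mem_range, Finset.mem_union, Finset.mem_Ico]
    omega
  have hsign : ∀ k, k < n → |B k| = (-1:ℝ)^k * B k := by
    intro k hk
    have hnonneg : 0 ≤ (-1:ℝ)^k * B k := by
      rw [hBval k, herase k hk,
        Finset.prod_union (by
          simp only [Finset.disjoint_left, Finset.mem_range, Finset.mem_Ico]
          intro j hj
          omega), ← mul_assoc]
      have h1 : (-1:ℝ)^k * ∏ j ∈ range k, (x0 - v j)/(v k - v j)
          = ∏ j ∈ range k, ((x0 - v j)/(v j - v k)) := by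
        rw [show ((-1:ℝ)^k) = ∏ _j ∈ range k, (-1:ℝ) from by
          rw [Finset.prod_const, card_range], ← Finset.prod_mul_distrib]
        refine Finset.prod_congr rfl fun j _ => ?_
        rw [show v j - v k = -(v k - v j) from by ring, div_neg, neg_one_mul]
      rw [h1]
      apply mul_nonneg
      · apply Finset.prod_nonneg
        intro j hj
        have hjk : j < k := Finset.mem_range.mp hj
        apply div_nonneg
        · have := hx0v j (lt_trans hjk hk); linarith
        · have := hvmono j k hjk hk; linarith
      · apply Finset.prod_nonneg
        intro j hj
        rw [Finset.mem_Ico] at hj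
        apply div_nonneg
        · have := hx0v j hj.2; linarith
        · have := hvmono k j (by omega) hj.2; linarith
    calc |B k| = |(-1:ℝ)^k * B k| := by
          rw [abs_mul, abs_pow, abs_neg, abs_one, one_pow, one_mul]
      _ = (-1:ℝ)^k * B k := abs_of_nonneg hnonneg
  -- main chain
  calc |q.eval x0| = |∑ k ∈ range n, q.eval (v k) * B k| := by rw [hqx x0]
    _ ≤ ∑ k ∈ range n, |q.eval (v k) * B k| := Finset.abs_sum_le_sum_abs _ _
    _ = ∑ k ∈ range n, |q.eval (v k)| * |B k| := by
        refine Finset.sum_congr rfl fun k _ => abs_mul _ _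
    _ ≤ ∑ k ∈ range n, ((n : ℝ) * M / Real.sin (θ k)) * |B k| := by
        apply Finset.sum_le_sum
        intro k hk
        have hk' : k < n := Finset.mem_range.mp hk
        apply mul_le_mul_of_nonneg_right _ (abs_nonneg _)
        rw [le_div_iff₀ (hsin k hk')]
        exact hnodeq k hk'
    _ = ∑ k ∈ range n, M * (Td.eval (v k) * B k) := by
        refine Finset.sum_congr rfl fun k hk => ?_
        have hk' : k < n := Finset.mem_range.mp hk
        rw [hsign k hk', hTdveval k hk']
        have hsne := (hsin k hk').ne'
        field_simp
    _ = M * Td.eval x0 := by rw [← Finset.mul_sum, ← hTdx x0]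
    _ ≤ M * ((n:ℝ)^2) := by
        apply mul_le_mul_of_nonneg_left _ hM0
        exact T_deriv_le_sq n hn x0 hx0 hx1
    _ = (n:ℝ)^2 * M := mul_comm _ _





/-- Markov brothers' inequality on `[-1,1]`. -/
lemma markov_interval (n : ℕ) (hn : 1 ≤ n) (p : ℝ[X]) (hp : p.natDegree ≤ n) (M : ℝ)
    (hM : ∀ x ∈ Set.Icc (-1 : ℝ) 1, |p.eval x| ≤ M) :
    ∀ x ∈ Set.Icc (-1 : ℝ) 1, |(derivative p).eval x| ≤ (n : ℝ) ^ 2 * M := by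
  intro x hx
  have hn1 : (1:ℝ) ≤ n := by exact_mod_cast hn
  have hn' : (0:ℝ) < n := by linarith
  set t0 : ℝ := Real.cos (π / (2 * n)) with ht0
  have hbase : (0:ℝ) < π / (2 * n) := by positivity
  have hbase2 : π / (2 * n) ≤ π / 2 := by
    have h2n : (2:ℝ) ≤ 2 * n := by linarith
    exact div_le_div_of_nonneg_left Real.pi_pos.le (by norm_num) h2n
  rcases le_or_gt t0 x with hcase | hcase
  · exact markov_outer n hn p hp M hM x hcase hx.2
  rcases le_or_gt x (-t0) with hcase2 | hcase2
  · -- reflect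
    set pneg : ℝ[X] := p.comp (-X) with hpneg
    have hdeg : pneg.natDegree ≤ n := by
      refine le_trans (Polynomial.natDegree_comp_le) ?_
      rw [Polynomial.natDegree_neg, Polynomial.natDegree_X, mul_one]
      exact hp
    have hbound : ∀ y ∈ Set.Icc (-1:ℝ) 1, |pneg.eval y| ≤ M := by
      intro y hy
      rw [hpneg, Polynomial.eval_comp, Polynomial.eval_neg, Polynomial.eval_X]
      exact hM (-y) ⟨by linarith [hy.2], by linarith [hy.1]⟩
    have houter := markov_outer n hn pneg hdeg M hbound (-x) (by linarith) (by linarith [hx.1])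
    have hder : (derivative pneg).eval (-x) = - (derivative p).eval x := by
      rw [hpneg, Polynomial.derivative_comp, Polynomial.eval_mul, Polynomial.eval_comp]
      simp
    rw [hder, abs_neg] at houter
    exact houter
  · -- middle
    have hb := bernstein_ineq n hn p hp M hM x hx
    have hsinpos : 0 < Real.sin (π / (2 * n)) :=
      Real.sin_pos_of_pos_of_lt_pi hbase (by linarith [Real.pi_pos])
    have hsin1n : 1 / (n:ℝ) ≤ Real.sin (π / (2 * n)) := by
      have hms := Real.mul_le_sin (x := π / (2 * n)) hbase.le hbase2
      have heq : 2 / π * (π / (2 * n)) = 1 / n := by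
        rw [div_mul_div_comm]
        rw [show (2:ℝ) * π = π * 2 from mul_comm 2 π]
        rw [show π * (2 * (n:ℝ)) = (π * 2) * n from by ring]
        rw [← div_div, div_self (by positivity : π * 2 ≠ 0)]
      rw [heq] at hms
      exact hms
    have hsqrt : Real.sin (π / (2 * n)) ≤ Real.sqrt (1 - x ^ 2) := by
      have hx2 : x ^ 2 ≤ t0 ^ 2 := sq_le_sq' (by linarith) (by linarith)
      have h1 : 1 - t0 ^ 2 ≤ 1 - x ^ 2 := by linarith
      have h2 : Real.sqrt (1 - t0 ^ 2) = Real.sin (π / (2 * n)) := by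
        rw [ht0, show (1:ℝ) - Real.cos (π / (2 * n)) ^ 2 = Real.sin (π / (2 * n)) ^ 2 from by
          rw [Real.sin_sq], Real.sqrt_sq_eq_abs, abs_of_pos hsinpos]
      rw [← h2]
      exact Real.sqrt_le_sqrt h1
    have h1n : 1 / (n:ℝ) ≤ Real.sqrt (1 - x ^ 2) := le_trans hsin1n hsqrt
    have hq1 : |(derivative p).eval x| * (1 / (n:ℝ)) ≤ (n:ℝ) * M :=
      le_trans (mul_le_mul_of_nonneg_left h1n (abs_nonneg _)) hb
    have hrw : |(derivative p).eval x| = |(derivative p).eval x| * (1 / (n:ℝ)) * n := by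
      field_simp
    rw [hrw]
    calc |(derivative p).eval x| * (1 / (n:ℝ)) * n ≤ ((n:ℝ) * M) * n :=
          mul_le_mul_of_nonneg_right hq1 hn'.le
      _ = (n:ℝ) ^ 2 * M := by ring

/-- Markov inequality on `[0,1]` with constant `2 q²`. -/
lemma markov01 (q : ℕ) (hq : 1 ≤ q) (f : ℝ[X]) (hf : f.natDegree ≤ q) (M : ℝ)
    (hM : ∀ x ∈ Set.Icc (0:ℝ) 1, |f.eval x| ≤ M) :
    ∀ y ∈ Set.Icc (0:ℝ) 1, |(derivative f).eval y| ≤ 2 * (q:ℝ) ^ 2 * M := by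
  intro y hy
  set lin : ℝ[X] := C (1/2 : ℝ) * X + C (1/2 : ℝ) with hlin
  set g : ℝ[X] := f.comp lin with hg
  have hdeg : g.natDegree ≤ q := by
    refine le_trans (Polynomial.natDegree_comp_le) ?_
    have h1 : lin.natDegree ≤ 1 := by
      refine le_trans (Polynomial.natDegree_add_le _ _) ?_
      rw [Polynomial.natDegree_C]
      refine max_le (le_trans (Polynomial.natDegree_C_mul_le _ _) ?_) (by norm_num)
      rw [Polynomial.natDegree_X]
    calc f.natDegree * lin.natDegree ≤ f.natDegree * 1 := Nat.mul_le_mul_left _ h1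
      _ ≤ q := by rw [mul_one]; exact hf
  have hlineval : ∀ x : ℝ, lin.eval x = (x + 1) / 2 := by
    intro x
    rw [hlin]
    simp
    ring
  have hbound : ∀ x ∈ Set.Icc (-1:ℝ) 1, |g.eval x| ≤ M := by
    intro x hxm
    rw [hg, Polynomial.eval_comp, hlineval]
    exact hM _ ⟨by linarith [hxm.1], by linarith [hxm.2]⟩
  have hmark := markov_interval q hq g hdeg M hbound (2 * y - 1)
    ⟨by linarith [hy.1], by linarith [hy.2]⟩
  have hder : (derivative g).eval (2 * y - 1) = (1/2 : ℝ) * (derivative f).eval y := by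
    rw [hg, Polynomial.derivative_comp, Polynomial.eval_mul, Polynomial.eval_comp, hlineval]
    have hdlin : derivative lin = C (1/2 : ℝ) := by
      rw [hlin]
      simp
    rw [hdlin]
    rw [show (2 * y - 1 + 1) / 2 = y from by ring]
    simp [mul_comm]
  rw [hder] at hmark
  rw [abs_mul] at hmark
  rw [show |(1/2 : ℝ)| = 1/2 from by norm_num] at hmark
  linarith [hmark]


end RealPart

end MarkovProofSection

open Polynomial Real in
/-- **Uniform bounds from samples via Markov's inequality.** Let `f` be a real polynomial of
degree `q` and `U ⊆ [0,1]` such that every point of `[0,1]` is within distance `Δ < 1/(2q²)`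
of `U`. Then `max_{x∈[0,1]} |f(x)| ≤ (sup_{u∈U} |f(u)|)/(1 − 2q²Δ)`. -/
theorem uniform_bound_from_samples (q : ℕ) (f : Polynomial ℝ) (hf : f.natDegree ≤ q)
    (U : Set ℝ) (hU : U ⊆ Set.Icc (0 : ℝ) 1) (Δ : ℝ) (hΔ : Δ < 1 / (2 * (q : ℝ) ^ 2))
    (hcover : ∀ x ∈ Set.Icc (0 : ℝ) 1, ∃ u ∈ U, |x - u| ≤ Δ) :
    ∀ x ∈ Set.Icc (0 : ℝ) 1,
      |f.eval x| ≤ sSup ((fun u => |f.eval u|) '' U) / (1 - 2 * (q : ℝ) ^ 2 * Δ) := by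
  -- q = 0 is vacuous
  rcases Nat.eq_zero_or_pos q with hq0 | hq
  · exfalso
    obtain ⟨u, _, hu⟩ := hcover 0 ⟨le_rfl, zero_le_one⟩
    have : Δ < 0 := by
      rw [hq0] at hΔ
      norm_num at hΔ
      exact hΔ
    have := abs_nonneg (0 - u)
    linarith
  intro x hx
  have hq1 : (1:ℝ) ≤ q := by exact_mod_cast hq
  have hqpos : (0:ℝ) < 2 * (q:ℝ)^2 := by positivity
  have hΔ0 : 0 ≤ Δ := by
    obtain ⟨u, _, hu⟩ := hcover 0 ⟨le_rfl, zero_le_one⟩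
    exact le_trans (abs_nonneg _) hu
  have hpos : 0 < 1 - 2 * (q:ℝ)^2 * Δ := by
    have h1 : 2 * (q:ℝ)^2 * Δ < 2 * (q:ℝ)^2 * (1 / (2 * (q:ℝ)^2)) :=
      mul_lt_mul_of_pos_left hΔ hqpos
    rw [mul_one_div, div_self hqpos.ne'] at h1
    linarith
  -- maximum of |f| on [0,1]
  have hcompact : IsCompact (Set.Icc (0:ℝ) 1) := isCompact_Icc
  have hcont : ContinuousOn (fun t : ℝ => |f.eval t|) (Set.Icc 0 1) :=
    (continuous_abs.comp (Polynomial.continuous f)).continuousOn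
  obtain ⟨y, hyIcc, hymax'⟩ := hcompact.exists_isMaxOn (⟨0, by norm_num⟩ : (Set.Icc (0:ℝ) 1).Nonempty) hcont
  have hymax : ∀ t ∈ Set.Icc (0:ℝ) 1, |f.eval t| ≤ |f.eval y| := fun t ht => hymax' ht
  set K : ℝ := |f.eval y| with hK
  set S : ℝ := sSup ((fun u => |f.eval u|) '' U) with hS
  -- S bounds values on U
  have hbddS : BddAbove ((fun u => |f.eval u|) '' U) := by
    refine ⟨K, ?_⟩
    rintro a ⟨u, hu, rfl⟩
    exact hymax u (hU hu)
  have hSle : ∀ u ∈ U, |f.eval u| ≤ S := fun u hu =>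
    le_csSup hbddS ⟨u, hu, rfl⟩
  -- derivative bound
  have hmark := markov01 q hq f hf K (fun t ht => hymax t ht)
  -- MVT
  obtain ⟨u, huU, hud⟩ := hcover y hyIcc
  have hmvt : |f.eval y - f.eval u| ≤ 2 * (q:ℝ)^2 * K * |y - u| := by
    have hconv : Convex ℝ (Set.Icc (0:ℝ) 1) := convex_Icc 0 1
    have hderiv : ∀ t ∈ Set.Icc (0:ℝ) 1,
        HasDerivWithinAt (fun z : ℝ => f.eval z) ((derivative f).eval t) (Set.Icc 0 1) t :=
      fun t _ => (f.hasDerivAt t).hasDerivWithinAt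
    have hbd : ∀ t ∈ Set.Icc (0:ℝ) 1, ‖(derivative f).eval t‖ ≤ 2 * (q:ℝ)^2 * K := by
      intro t ht
      rw [Real.norm_eq_abs]
      exact hmark t ht
    have := hconv.norm_image_sub_le_of_norm_hasDerivWithin_le hderiv hbd (hU huU) hyIcc
    simpa [Real.norm_eq_abs] using this
  have hKposneg : 0 ≤ K := abs_nonneg _
  have hchain : K ≤ S + 2 * (q:ℝ)^2 * K * Δ := by
    have h1 : |f.eval y| - |f.eval u| ≤ |f.eval y - f.eval u| := by
      have := abs_sub_abs_le_abs_sub (f.eval y) (f.eval u)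
      linarith
    have h2 : 2 * (q:ℝ)^2 * K * |y - u| ≤ 2 * (q:ℝ)^2 * K * Δ := by
      apply mul_le_mul_of_nonneg_left hud (by positivity)
    have h3 := hSle u huU
    calc K = |f.eval y| := hK
      _ ≤ |f.eval u| + |f.eval y - f.eval u| := by linarith [h1]
      _ ≤ S + 2 * (q:ℝ)^2 * K * Δ := by linarith [hmvt, h2, h3]
  have hfinal : K ≤ S / (1 - 2 * (q:ℝ)^2 * Δ) := by
    rw [le_div_iff₀ hpos]
    nlinarith [hchain]
  calc |f.eval x| ≤ K := hymax x hx
    _ ≤ S / (1 - 2 * (q:ℝ)^2 * Δ) := hfinal
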